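/- Let l ≥ 5 be an integer. An element Σ c_{u,v}·XY(u,v) of the free ℂ-vector space with basis symbols XY(u,v), one for each (u,v) ∈ (ℤ/lℤ)² with gcd(u,v,l) = 1, maps to 0 under the linear map sending XY(u,v) to the class of xy(u,v) in M₄(l) if and only if it lies in the span of the elements XY(u,v) − XY(v,−u) and Σ_{k=0}^{l−1} ( XY(v+ku, −(k+1)u−v) − XY(−(k+1)u−v, u) − XY(u, v+ku) ), taken over all (u,v) with gcd(u,v,l) = 1. -/

import Mathlib

/-!
The relations in the span hold in `M₄(l)`: the first family is the relation `xy(u,v) = xy(v,-u)`,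
and by the four-term relation (with `y²(-u-v,u) = -x²(u,u+v)`) the `k`-th summand of the second
family is `x²(u, v+(k+1)u) - x²(u, v+ku)`, so the sum telescopes around the orbit `v ↦ v + u`,
which closes up after `l` steps.

Conversely, let `Q` be the free space on coprime pairs modulo the span and `T(u,v)` the class of
`XY(v,-u-v) - XY(-u-v,u) - XY(u,v)`. Sending `xy(u,v)` to its class and `x²(u,v)` to
`l⁻¹ Σ_{n<l} n T(u, v+nu)` respects every relation of `M₄(l)`: because `Σ_{n<l} T(u, v+nu)`
vanishes in `Q`, the difference of this expression at `(u,u+v)` and `(u,v)` is `T(u,v)`, which is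
the four-term relation. The resulting map `M₄(l) → Q` composed with the `xy`-map is the quotient
map, so the kernel of the `xy`-map lies in the span.
-/

open scoped BigOperators

namespace MW

variable (l : ℕ)

/-- Index type for the basis symbols: `0 ↦ x²`, `1 ↦ xy`, `2 ↦ y²`. -/
abbrev Sym := Fin 3 × ZMod l × ZMod l

/-- The free ℂ-vector space on the symbols. -/
abbrev V := Sym l →₀ ℂ

/-- `gcd(u,v,l) = 1`. -/
def copr (u v : ZMod l) : Prop := Nat.gcd (Nat.gcd (ZMod.val u) (ZMod.val v)) l = 1

instance (u v : ZMod l) : Decidable (copr l u v) := by unfold copr; infer_instance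

noncomputable def X2 (u v : ZMod l) : V l := Finsupp.single (0, u, v) 1
noncomputable def XY (u v : ZMod l) : V l := Finsupp.single (1, u, v) 1
noncomputable def Y2 (u v : ZMod l) : V l := Finsupp.single (2, u, v) 1

/-- The relation subspace: the relations of Merel–Shokurov on coprime symbols,
together with the (dummy) basis vectors at non-coprime indices. -/
noncomputable def Rel : Submodule ℂ (V l) :=
  Submodule.span ℂ
    ({ w | ∃ u v, ¬ copr l u v ∧ (w = X2 l u v ∨ w = XY l u v ∨ w = Y2 l u v) } ∪
     { w | ∃ u v, copr l u v ∧
        (w = X2 l u v + Y2 l v (-u) ∨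
         w = XY l u v - XY l v (-u) ∨
         w = Y2 l u v + X2 l v (-u) ∨
         w = XY l v (-u - v) - XY l (-u - v) u + Y2 l (-u - v) u + X2 l u v - XY l u v) })

/-- The space of weight four modular symbols of level `l`. -/
abbrev M := V l ⧸ Rel l

noncomputable def x2 (u v : ZMod l) : M l := Submodule.Quotient.mk (X2 l u v)
noncomputable def xy (u v : ZMod l) : M l := Submodule.Quotient.mk (XY l u v)
noncomputable def y2 (u v : ZMod l) : M l := Submodule.Quotient.mk (Y2 l u v)

/-- The class of `p₂·x²(u,v) + p₁·xy(u,v) + p₀·y²(u,v)` in `M l`. -/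
noncomputable def pcl (p2 p1 p0 : ℂ) (u v : ZMod l) : M l :=
  p2 • x2 l u v + p1 • xy l u v + p0 • y2 l u v

end MW

theorem Finset.sum_range_nsmul_succ_sub_nsmul {G : Type*} [AddCommGroup G] (t : ℕ → G) (L : ℕ) :
    ∑ n ∈ Finset.range L, (n • t (n + 1) - n • t n) =
      L • t L - ∑ n ∈ Finset.range L, t (n + 1) := by
  induction L with
  | zero => simp
  | succ L ih =>
    rw [Finset.sum_range_succ, ih, Finset.sum_range_succ, succ_nsmul]
    abel

theorem IsCoprime.of_det_eq_one {R : Type*} [CommRing R] {u v : R} (h : IsCoprime u v)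
    {p q r s : R} (hdet : p * s - q * r = 1) : IsCoprime (p * u + q * v) (r * u + s * v) := by
  obtain ⟨a, b, hab⟩ := h
  exact ⟨a * s - b * r, b * p - a * q, by linear_combination (a * u + b * v) * hdet + hab⟩

namespace MW

section Coprime

variable {l : ℕ} [NeZero l]

theorem copr_iff_isCoprime (u v : ZMod l) : copr l u v ↔ IsCoprime u v := by
  rw [copr, ← Nat.Coprime, ← ZMod.isUnit_iff_coprime]
  constructor
  · intro hg
    obtain ⟨c, hc⟩ := hg.exists_left_inv
    have hbez : ((Nat.gcd u.val v.val : ℤ) : ZMod l) =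
        u * (Nat.gcdA u.val v.val : ZMod l) + v * (Nat.gcdB u.val v.val : ZMod l) := by
      rw [Nat.gcd_eq_gcd_ab]; push_cast; simp only [ZMod.natCast_zmod_val]
    push_cast at hbez
    exact ⟨c * Nat.gcdA u.val v.val, c * Nat.gcdB u.val v.val, by
      linear_combination hc - c * hbez⟩
  · intro h
    refine h.isUnit_of_dvd' ?_ ?_
    · simpa using Nat.cast_dvd_cast (α := ZMod l) (Nat.gcd_dvd_left u.val v.val)
    · simpa using Nat.cast_dvd_cast (α := ZMod l) (Nat.gcd_dvd_right u.val v.val)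

theorem copr_of_det_eq_one {u v : ZMod l} (h : copr l u v) {p q r s u' v' : ZMod l}
    (hdet : p * s - q * r = 1) (hu' : u' = p * u + q * v) (hv' : v' = r * u + s * v) :
    copr l u' v' := by
  rw [copr_iff_isCoprime] at h ⊢
  rw [hu', hv']
  exact h.of_det_eq_one hdet

theorem copr_rot {u v : ZMod l} (h : copr l u v) : copr l v (-u) :=
  copr_of_det_eq_one h (p := 0) (q := 1) (r := -1) (s := 0) (by ring) (by ring) (by ring)

theorem copr_rot_iff (u v : ZMod l) : copr l v (-u) ↔ copr l u v :=
  ⟨fun h => copr_of_det_eq_one h (p := 0) (q := -1) (r := 1) (s := 0) (by ring) (by ring)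
    (by ring), copr_rot⟩

theorem copr_neg_iff (u v : ZMod l) : copr l (-u) (-v) ↔ copr l u v :=
  (copr_rot_iff v (-u)).trans (copr_rot_iff u v)

theorem copr_shear {u v : ZMod l} (h : copr l u v) (k : ZMod l) : copr l u (v + k * u) :=
  copr_of_det_eq_one h (p := 1) (q := 0) (r := k) (s := 1) (by ring) (by ring) (by ring)

theorem copr_shear_fst {u v : ZMod l} (h : copr l u v) (k : ZMod l) :
    copr l (v + k * u) (-(k + 1) * u - v) :=
  copr_of_det_eq_one h (p := k) (q := 1) (r := -(k + 1)) (s := -1) (by ring) (by ring) (by ring)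

theorem copr_shear_snd {u v : ZMod l} (h : copr l u v) (k : ZMod l) :
    copr l (-(k + 1) * u - v) u :=
  copr_of_det_eq_one h (p := -(k + 1)) (q := -1) (r := 1) (s := 0) (by ring) (by ring) (by ring)

end Coprime

section ModularSymbols

variable {l : ℕ}

theorem xy_eq_xy_rot {u v : ZMod l} (h : copr l u v) : xy l u v = xy l v (-u) := by
  rw [xy, xy, Submodule.Quotient.eq]
  exact Submodule.subset_span (Or.inr ⟨u, v, h, Or.inr (Or.inl rfl)⟩)

theorem y2_eq_neg_x2_rot {u v : ZMod l} (h : copr l u v) : y2 l u v = -x2 l v (-u) := by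
  rw [eq_neg_iff_add_eq_zero, y2, x2, ← Submodule.Quotient.mk_add,
    Submodule.Quotient.mk_eq_zero]
  exact Submodule.subset_span (Or.inr ⟨u, v, h, Or.inr (Or.inr (Or.inl rfl))⟩)

theorem xy_four_term {u v : ZMod l} (h : copr l u v) :
    xy l v (-u - v) - xy l (-u - v) u + y2 l (-u - v) u + x2 l u v - xy l u v = 0 := by
  simp only [xy, y2, x2, ← Submodule.Quotient.mk_add, ← Submodule.Quotient.mk_sub,
    Submodule.Quotient.mk_eq_zero]
  exact Submodule.subset_span (Or.inr ⟨u, v, h, Or.inr (Or.inr (Or.inr rfl))⟩)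

theorem xy_three_term_eq_x2_sub [NeZero l] {u v : ZMod l} (h : copr l u v) :
    xy l v (-u - v) - xy l (-u - v) u - xy l u v = x2 l u (u + v) - x2 l u v := by
  have hy2 := y2_eq_neg_x2_rot (copr_shear_snd h 0)
  simp only [zero_add, neg_mul, one_mul, neg_sub, sub_neg_eq_add] at hy2
  have h4 := xy_four_term h
  rw [add_comm v u] at hy2
  rw [hy2] at h4
  rw [← sub_eq_zero, ← h4]
  abel

theorem sum_xy_shear_cycle [NeZero l] {u v : ZMod l} (h : copr l u v) :
    ∑ k ∈ Finset.range l,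
      (xy l (v + (k : ZMod l) * u) (-((k : ZMod l) + 1) * u - v)
        - xy l (-((k : ZMod l) + 1) * u - v) u - xy l u (v + (k : ZMod l) * u)) = 0 := by
  have hterm (k : ℕ) :
      xy l (v + (k : ZMod l) * u) (-((k : ZMod l) + 1) * u - v)
        - xy l (-((k : ZMod l) + 1) * u - v) u - xy l u (v + (k : ZMod l) * u)
      = x2 l u (v + ((k + 1 : ℕ) : ZMod l) * u) - x2 l u (v + (k : ZMod l) * u) := by
    have key := xy_three_term_eq_x2_sub (copr_shear h (k : ZMod l))
    rwa [show -u - (v + k * u) = -((k : ZMod l) + 1) * u - v by ring,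
      show u + (v + k * u) = v + ((k + 1 : ℕ) : ZMod l) * u by push_cast; ring] at key
  rw [Finset.sum_congr rfl fun k _ => hterm k,
    Finset.sum_range_sub (fun k => x2 l u (v + (k : ZMod l) * u)), ZMod.natCast_self,
    Nat.cast_zero, sub_self]

end ModularSymbols
section XYQuotient

variable (l : ℕ)

abbrev CoprimePair := {p : ZMod l × ZMod l // copr l p.1 p.2}

noncomputable def xyRelations : Submodule ℂ (CoprimePair l →₀ ℂ) :=
  Submodule.span ℂ
    ({ w : {p : ZMod l × ZMod l // copr l p.1 p.2} →₀ ℂ |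
        ∃ p q : {p : ZMod l × ZMod l // copr l p.1 p.2},
          (q.1.1 = p.1.2 ∧ q.1.2 = -p.1.1) ∧
          w = Finsupp.single p 1 - Finsupp.single q 1 } ∪
     { w : {p : ZMod l × ZMod l // copr l p.1 p.2} →₀ ℂ |
        ∃ (u v : ZMod l) (_ : copr l u v)
          (A B C : ℕ → {p : ZMod l × ZMod l // copr l p.1 p.2}),
          (∀ k : ℕ,
            (A k).1 = (v + (k : ZMod l) * u, -((k : ZMod l) + 1) * u - v) ∧
            (B k).1 = (-((k : ZMod l) + 1) * u - v, u) ∧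
            (C k).1 = (u, v + (k : ZMod l) * u)) ∧
          w = ∑ k ∈ Finset.range l,
            (Finsupp.single (A k) 1 - Finsupp.single (B k) 1 -
              Finsupp.single (C k) 1) })

abbrev XYQuot := (CoprimePair l →₀ ℂ) ⧸ xyRelations l

noncomputable def xyLift : (CoprimePair l →₀ ℂ) →ₗ[ℂ] M l :=
  Finsupp.lift (M l) ℂ (CoprimePair l) (fun p => xy l p.1.1 p.1.2)

variable {l}

@[simp] theorem xyLift_single (p : CoprimePair l) :
    xyLift l (Finsupp.single p 1) = xy l p.1.1 p.1.2 := by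
  simp [xyLift]

noncomputable def xyCls (u v : ZMod l) : XYQuot l :=
  if h : copr l u v then Submodule.Quotient.mk (Finsupp.single ⟨(u, v), h⟩ 1) else 0

noncomputable def threeTermCls (u v : ZMod l) : XYQuot l :=
  xyCls v (-u - v) - xyCls (-u - v) u - xyCls u v

theorem xyCls_of_copr {u v : ZMod l} (h : copr l u v) :
    xyCls u v = Submodule.Quotient.mk (Finsupp.single ⟨(u, v), h⟩ 1) :=
  dif_pos h

theorem xyCls_rot [NeZero l] (u v : ZMod l) : xyCls u v = xyCls v (-u) := by
  by_cases h : copr l u v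
  · rw [xyCls_of_copr h, xyCls_of_copr (copr_rot h), Submodule.Quotient.eq]
    exact Submodule.subset_span
      (Or.inl ⟨⟨(u, v), h⟩, ⟨(v, -u), copr_rot h⟩, ⟨rfl, rfl⟩, rfl⟩)
  · rw [xyCls, xyCls, dif_neg h, dif_neg (mt (copr_rot_iff u v).mp h)]

theorem xyCls_neg [NeZero l] (u v : ZMod l) : xyCls (-u) (-v) = xyCls u v := by
  rw [xyCls_rot u v, xyCls_rot v (-u)]

theorem threeTermCls_neg [NeZero l] (u v : ZMod l) :
    threeTermCls (-u) (-v) = threeTermCls u v := by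
  rw [threeTermCls, threeTermCls, show -(-u) - -v = -(-u - v) by ring, xyCls_neg, xyCls_neg,
    xyCls_neg]

theorem sum_threeTermCls_shear [NeZero l] {u v : ZMod l} (h : copr l u v) :
    ∑ k ∈ Finset.range l, threeTermCls u (v + (k : ZMod l) * u) = 0 := by
  let A : ℕ → CoprimePair l := fun k =>
    ⟨(v + (k : ZMod l) * u, -((k : ZMod l) + 1) * u - v), copr_shear_fst h _⟩
  let B : ℕ → CoprimePair l := fun k => ⟨(-((k : ZMod l) + 1) * u - v, u), copr_shear_snd h _⟩
  let C : ℕ → CoprimePair l := fun k => ⟨(u, v + (k : ZMod l) * u), copr_shear h _⟩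
  have hcycle : ∑ k ∈ Finset.range l,
      (Finsupp.single (A k) (1 : ℂ) - Finsupp.single (B k) 1 - Finsupp.single (C k) 1)
      ∈ xyRelations l :=
    Submodule.subset_span (Or.inr ⟨u, v, h, A, B, C, fun k => ⟨rfl, rfl, rfl⟩, rfl⟩)
  rw [← Submodule.Quotient.mk_eq_zero, ← Submodule.mkQ_apply, map_sum] at hcycle
  refine Eq.trans (Finset.sum_congr rfl fun k _ => ?_) hcycle
  rw [threeTermCls, show -u - (v + (k : ZMod l) * u) = -((k : ZMod l) + 1) * u - v by ring,
    xyCls_of_copr (A k).2, xyCls_of_copr (B k).2, xyCls_of_copr (C k).2]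
  rfl

/-- A discrete antiderivative of `threeTermCls u` along the orbit `v ↦ v + u`, averaged over its
`l` base points; `x2Cls_add_sub` is the resulting difference equation. -/
noncomputable def x2Cls (u v : ZMod l) : XYQuot l :=
  if copr l u v then
    (l : ℂ)⁻¹ • ∑ n ∈ Finset.range l, n • threeTermCls u (v + (n : ZMod l) * u)
  else 0

theorem x2Cls_add_sub [NeZero l] {u v : ZMod l} (h : copr l u v) :
    x2Cls u (u + v) - x2Cls u v = threeTermCls u v := by
  set t : ℕ → XYQuot l := fun n => threeTermCls u (v + (n : ZMod l) * u) with ht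
  have h_succ : ∀ n : ℕ, threeTermCls u (u + v + (n : ZMod l) * u) = t (n + 1) := fun n => by
    rw [ht]; congr 1; push_cast; ring
  have h_period : t l = t 0 := by simp [ht]
  have h_shift : ∑ n ∈ Finset.range l, t (n + 1) = 0 := by
    have := Finset.sum_range_succ' t l
    rw [Finset.sum_range_succ, h_period, add_left_inj] at this
    rw [← this]; exact sum_threeTermCls_shear h
  have hl : (l : ℂ) ≠ 0 := Nat.cast_ne_zero.mpr (NeZero.ne l)
  rw [x2Cls, x2Cls, if_pos h, if_pos (by simpa [add_comm u v] using copr_shear h 1)]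
  simp only [h_succ]
  rw [← smul_sub, ← Finset.sum_sub_distrib, Finset.sum_range_nsmul_succ_sub_nsmul, h_shift,
    sub_zero, h_period, ← Nat.cast_smul_eq_nsmul ℂ, smul_smul, inv_mul_cancel₀ hl, one_smul]
  simp [ht]

theorem x2Cls_neg [NeZero l] (u v : ZMod l) : x2Cls (-u) (-v) = x2Cls u v := by
  simp only [x2Cls, copr_neg_iff]
  congr 2
  refine Finset.sum_congr rfl fun n _ => ?_
  rw [show -v + (n : ZMod l) * -u = -(v + n * u) by ring, threeTermCls_neg]

noncomputable def symbolImage : Sym l → XYQuot l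
  | (0, u, v) => x2Cls u v
  | (1, u, v) => xyCls u v
  | (2, u, v) => -x2Cls v (-u)

noncomputable def toXYQuot : V l →ₗ[ℂ] XYQuot l :=
  Finsupp.lift (XYQuot l) ℂ (Sym l) symbolImage

@[simp] theorem toXYQuot_X2 (u v : ZMod l) : toXYQuot (X2 l u v) = x2Cls u v := by
  simp [toXYQuot, X2, symbolImage]

@[simp] theorem toXYQuot_XY (u v : ZMod l) : toXYQuot (XY l u v) = xyCls u v := by
  simp [toXYQuot, XY, symbolImage]

@[simp] theorem toXYQuot_Y2 (u v : ZMod l) : toXYQuot (Y2 l u v) = -x2Cls v (-u) := by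
  simp [toXYQuot, Y2, symbolImage]

theorem rel_le_ker_toXYQuot [NeZero l] : Rel l ≤ LinearMap.ker toXYQuot := by
  rw [Rel, Submodule.span_le]
  rintro w (⟨u, v, hn, rfl | rfl | rfl⟩ | ⟨u, v, h, rfl | rfl | rfl | rfl⟩) <;>
    simp only [SetLike.mem_coe, LinearMap.mem_ker, map_add, map_sub, toXYQuot_X2, toXYQuot_XY,
      toXYQuot_Y2]
  · simp [x2Cls, hn]
  · simp [xyCls, hn]
  · simp [x2Cls, copr_rot_iff, hn]
  · rw [x2Cls_neg, add_neg_cancel]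
  · rw [← xyCls_rot, sub_self]
  · exact neg_add_cancel _
  · have h4 := x2Cls_add_sub h
    rw [threeTermCls] at h4
    rw [show -(-u - v) = u + v by ring]
    linear_combination (norm := abel) -h4

noncomputable def fromM [NeZero l] : M l →ₗ[ℂ] XYQuot l :=
  (Rel l).liftQ toXYQuot rel_le_ker_toXYQuot

theorem fromM_comp_xyLift [NeZero l] : fromM ∘ₗ xyLift l = (xyRelations l).mkQ := by
  refine Finsupp.lhom_ext' fun p => LinearMap.ext_ring ?_
  simp [fromM, xyLift, xy, xyCls_of_copr p.2]

theorem xyRelations_le_ker_xyLift [NeZero l] : xyRelations l ≤ LinearMap.ker (xyLift l) := by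
  rw [xyRelations, Submodule.span_le]
  rintro w (⟨p, q, ⟨hq₁, hq₂⟩, rfl⟩ | ⟨u, v, h, A, B, C, hABC, rfl⟩) <;>
    simp only [SetLike.mem_coe, LinearMap.mem_ker, map_sub, map_sum, xyLift_single]
  · rw [hq₁, hq₂, ← xy_eq_xy_rot p.2, sub_self]
  · simp only [(hABC _).1, (hABC _).2.1, (hABC _).2.2]
    exact sum_xy_shear_cycle h

theorem ker_xyLift [NeZero l] : LinearMap.ker (xyLift l) = xyRelations l := by
  refine le_antisymm ?_ xyRelations_le_ker_xyLift
  calc LinearMap.ker (xyLift l)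
      ≤ LinearMap.ker (fromM ∘ₗ xyLift l) := LinearMap.ker_le_ker_comp _ _
    _ = xyRelations l := by rw [fromM_comp_xyLift, Submodule.ker_mkQ]

end XYQuotient

end MW

open MW in
theorem stmt1 (l : ℕ) (hl : 5 ≤ l)
    (w : {p : ZMod l × ZMod l // copr l p.1 p.2} →₀ ℂ) :
    ((Finsupp.lift (M l) ℂ {p : ZMod l × ZMod l // copr l p.1 p.2})
        (fun p => xy l p.1.1 p.1.2)) w = 0 ↔
    w ∈ Submodule.span ℂ
      ({ w : {p : ZMod l × ZMod l // copr l p.1 p.2} →₀ ℂ |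
          ∃ p q : {p : ZMod l × ZMod l // copr l p.1 p.2},
            (q.1.1 = p.1.2 ∧ q.1.2 = -p.1.1) ∧
            w = Finsupp.single p 1 - Finsupp.single q 1 } ∪
       { w : {p : ZMod l × ZMod l // copr l p.1 p.2} →₀ ℂ |
          ∃ (u v : ZMod l) (_ : copr l u v)
            (A B C : ℕ → {p : ZMod l × ZMod l // copr l p.1 p.2}),
            (∀ k : ℕ,
              (A k).1 = (v + (k : ZMod l) * u, -((k : ZMod l) + 1) * u - v) ∧
              (B k).1 = (-((k : ZMod l) + 1) * u - v, u) ∧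
              (C k).1 = (u, v + (k : ZMod l) * u)) ∧
            w = ∑ k ∈ Finset.range l,
              (Finsupp.single (A k) 1 - Finsupp.single (B k) 1 -
                Finsupp.single (C k) 1) }) := by
  have : NeZero l := ⟨by omega⟩
  rw [← LinearMap.mem_ker]
  exact SetLike.ext_iff.mp ker_xyLift w
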